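/- Let v be as above: v(x) = x₁x₂ φ(−ln |x|²) for 0 < |x| ≤ 1/2, v(0) = 0, with φ C² satisfying φ → ∞, φ' → 0, φ'' → 0 at infinity. Then the Laplacian of v, given for x ≠ 0 by Δv(x) = −((2n+8)x₁x₂/|x|²) φ'(−ln|x|²) + (4x₁x₂/|x|²)(φ'(−ln|x|²) + φ''(−ln|x|²)), tends to 0 as |x| → 0; together with Δv(0) = 0 (computed from second partial derivatives along coordinate axes), Δv is continuous on the ball |x| ≤ 1/2. -/

import Mathlib

open Real Filter Metric Set Topology

/-! Δv(x) is x₁x₂/|x|², which lies in [-1, 1], times a combination of φ'(s) and φ''(s) at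
s = -ln |x|²; as x → 0, s → ∞, so that combination tends to 0. -/

lemma abs_mul_apply_div_norm_sq_le_one {ι : Type*} [Fintype ι] (x : EuclideanSpace ℝ ι)
    (i j : ι) : |x i * x j / ‖x‖ ^ 2| ≤ 1 := by
  rcases eq_or_ne x 0 with rfl | hx
  · simp
  have hi : |x i| ≤ ‖x‖ := PiLp.norm_apply_le x i
  have hj : |x j| ≤ ‖x‖ := PiLp.norm_apply_le x j
  have hx2 : 0 < ‖x‖ ^ 2 := pow_pos (norm_pos_iff.2 hx) 2
  rw [abs_div, abs_mul, abs_of_pos hx2, div_le_one hx2, sq]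
  exact mul_le_mul hi hj (abs_nonneg _) (norm_nonneg _)

lemma tendsto_norm_sq_nhdsNE_zero {E : Type*} [NormedAddCommGroup E] :
    Tendsto (fun x : E => ‖x‖ ^ 2) (𝓝[≠] 0) (𝓝[>] 0) := by
  refine tendsto_nhdsWithin_iff.2 ⟨?_, eventually_mem_nhdsWithin.mono fun x hx => ?_⟩
  · exact ((continuous_norm.pow 2).tendsto' 0 0 (by simp)).mono_left nhdsWithin_le_nhds
  · exact pow_pos (norm_pos_iff.2 hx) 2

lemma tendsto_neg_log_norm_sq_nhdsNE_zero {E : Type*} [NormedAddCommGroup E] :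
    Tendsto (fun x : E => -log (‖x‖ ^ 2)) (𝓝[≠] 0) atTop :=
  tendsto_neg_atBot_atTop.comp (tendsto_log_nhdsGT_zero.comp tendsto_norm_sq_nhdsNE_zero)

/-- The explicit formula for Δv tends to 0 as |x| → 0, so with Δv(0) = 0 the
Laplacian of v is continuous at the origin. -/
theorem stmt5 (n : ℕ) (hn : 2 ≤ n) (φ : ℝ → ℝ)
    (hφ' : Tendsto (deriv φ) atTop (nhds 0))
    (hφ'' : Tendsto (deriv (deriv φ)) atTop (nhds 0))
    (Δv : EuclideanSpace ℝ (Fin n) → ℝ)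
    (hΔv0 : Δv 0 = 0)
    (hΔv : ∀ x : EuclideanSpace ℝ (Fin n), x ≠ 0 → ‖x‖ ≤ 1/2 →
      Δv x = -(((2 * n + 8) * x ⟨0, by omega⟩ * x ⟨1, by omega⟩) / ‖x‖ ^ (2:ℕ))
              * deriv φ (-Real.log (‖x‖ ^ (2:ℕ)))
          + (4 * x ⟨0, by omega⟩ * x ⟨1, by omega⟩ / ‖x‖ ^ (2:ℕ))
              * (deriv φ (-Real.log (‖x‖ ^ (2:ℕ)))
                  + deriv (deriv φ) (-Real.log (‖x‖ ^ (2:ℕ))))) :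
    Tendsto Δv (nhdsWithin 0 {0}ᶜ) (nhds 0) ∧ ContinuousAt Δv 0 := by
  set s : EuclideanSpace ℝ (Fin n) → ℝ := fun x => -log (‖x‖ ^ 2)
  set q : EuclideanSpace ℝ (Fin n) → ℝ := fun x => x ⟨0, by omega⟩ * x ⟨1, by omega⟩ / ‖x‖ ^ 2
  have hs : Tendsto s (𝓝[≠] 0) atTop := tendsto_neg_log_norm_sq_nhdsNE_zero
  have hcoeff : Tendsto (fun x => -(2 * n + 8) * deriv φ (s x)
      + 4 * (deriv φ (s x) + deriv (deriv φ) (s x))) (𝓝[≠] 0) (𝓝 0) := by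
    simpa using ((hφ'.comp hs).const_mul _).add (((hφ'.comp hs).add (hφ''.comp hs)).const_mul 4)
  have hq : IsBoundedUnder (· ≤ ·) (𝓝[≠] 0) (norm ∘ q) :=
    isBoundedUnder_of_eventually_le (a := 1) <| Eventually.of_forall fun x =>
      abs_mul_apply_div_norm_sq_le_one x _ _
  have hΔv_eq : (fun x => (-(2 * n + 8) * deriv φ (s x)
      + 4 * (deriv φ (s x) + deriv (deriv φ) (s x))) * q x) =ᶠ[𝓝[≠] 0] Δv := by
    filter_upwards [self_mem_nhdsWithin,
      nhdsWithin_le_nhds (closedBall_mem_nhds (0 : EuclideanSpace ℝ (Fin n)) one_half_pos)]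
      with x hx hx_ball
    rw [hΔv x hx (by simpa using hx_ball)]
    ring
  have hlim : Tendsto Δv (𝓝[≠] 0) (𝓝 0) :=
    (hcoeff.zero_mul_isBoundedUnder_le hq).congr' hΔv_eq
  exact ⟨hlim, continuousAt_iff_punctured_nhds.2 (hΔv0 ▸ hlim)⟩
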